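/- Let (X,d) be a Lorentzian metric space with no chronological boundary and let J = {(x,y) : ∀p, d(p,y) ≥ d(p,x) and d(x,p) ≥ d(y,p)}. Then: J is a closed subset of X × X; J is reflexive, transitive, and antisymmetric; I ⊆ J; the push-up property holds: if (x,y) ∈ I and (y,z) ∈ J then (x,z) ∈ I, and if (x,y) ∈ J and (y,z) ∈ I then (x,z) ∈ I; and if (x,y) ∈ J and (y,z) ∈ J then d(x,y) + d(y,z) ≤ d(x,z). -/

import Mathlib

open Filter Topology Set

variable {X : Type*}

/-- Axiom (ii) of a Lorentzian metric space, relative to a given topology `T`: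
`d` is continuous and, for all `x y` and `ε > 0`, the set
`I_ε ∩ (closure (I(x,y)) × closure (I(x,y)))` is compact. -/
def LMSAxiom2 (T : TopologicalSpace X) (d : X → X → ℝ) : Prop :=
  letI := T
  Continuous (fun p : X × X => d p.1 p.2) ∧
    ∀ x y : X, ∀ ε : ℝ, 0 < ε →
      IsCompact ({p : X × X | ε ≤ d p.1 p.2} ∩
        (closure {z : X | 0 < d x z ∧ 0 < d z y} ×ˢ closure {z : X | 0 < d x z ∧ 0 < d z y}))

/-- Lorentzian metric space (LMS): `d ≥ 0`, reverse triangle inequality,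
axiom (ii) for the topology `T`, and `d` distinguishes points. -/
def IsLMS (T : TopologicalSpace X) (d : X → X → ℝ) : Prop :=
  (∀ x y : X, 0 ≤ d x y) ∧
  (∀ x y z : X, 0 < d x y → 0 < d y z → d x y + d y z ≤ d x z) ∧
  LMSAxiom2 T d ∧
  (∀ x y : X, x ≠ y → ∃ z : X, d x z ≠ d y z ∨ d z x ≠ d z y)

/-- No chronological boundary: `I(X) = X`. -/
def NoBoundary (d : X → X → ℝ) : Prop :=
  ∀ x : X, (∃ p, 0 < d p x) ∧ (∃ q, 0 < d x q)

/-- Countably generated: some countable set `G` satisfies `I(G) = X`. -/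
def CountablyGenerated (d : X → X → ℝ) : Prop :=
  ∃ G : Set X, G.Countable ∧ ∀ x : X, (∃ p ∈ G, 0 < d p x) ∧ (∃ q ∈ G, 0 < d x q)

/-- The causal relation `J` defined from the Lorentzian distance. -/
def Jrel (d : X → X → ℝ) (x y : X) : Prop :=
  ∀ p : X, d p x ≤ d p y ∧ d y p ≤ d x p

/-- Strict causal relation: `x < y`. -/
def CausalLt (d : X → X → ℝ) (x y : X) : Prop :=
  Jrel d x y ∧ x ≠ y

/-- An isocausal curve with parameter domain `S`. -/
def IsIsocausalOn (T : TopologicalSpace X) (d : X → X → ℝ) (γ : ℝ → X) (S : Set ℝ) : Prop :=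
  letI := T
  ContinuousOn γ S ∧ ∀ s ∈ S, ∀ t ∈ S, s < t → CausalLt d (γ s) (γ t)

/-- A maximizing curve on the domain `S`. -/
def MaximizingOn (d : X → X → ℝ) (γ : ℝ → X) (S : Set ℝ) : Prop :=
  ∀ t ∈ S, ∀ t' ∈ S, ∀ t'' ∈ S, t < t' → t' < t'' →
    d (γ t) (γ t') + d (γ t') (γ t'') = d (γ t) (γ t'')

/-- A time function: continuous and strictly increasing on causal pairs. -/
def IsTimeFunction (T : TopologicalSpace X) (d : X → X → ℝ) (τ : X → ℝ) : Prop :=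
  letI := T
  Continuous τ ∧ ∀ x y : X, CausalLt d x y → τ x < τ y

/-!
Every defining inequality of `J` is a closed condition because `d` is continuous, and
antisymmetry of `J` is exactly the point-distinguishing axiom. Inclusion `I ⊆ J` and the
reverse triangle inequality along `J` come from the reverse triangle inequality for `I`;
when one of the distances vanishes, the monotonicity of `d` built into `J` takes its place.
-/

namespace Jrel

variable {d : X → X → ℝ} {x y z : X}

theorem refl (x : X) : Jrel d x x :=
  fun _ => ⟨le_rfl, le_rfl⟩

theorem trans (hxy : Jrel d x y) (hyz : Jrel d y z) : Jrel d x z :=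
  fun p => ⟨(hxy p).1.trans (hyz p).1, (hyz p).2.trans (hxy p).2⟩

theorem antisymm (hsep : ∀ x y : X, x ≠ y → ∃ z : X, d x z ≠ d y z ∨ d z x ≠ d z y)
    (hxy : Jrel d x y) (hyx : Jrel d y x) : x = y := by
  by_contra hne
  obtain ⟨z, hz | hz⟩ := hsep x y hne
  · exact hz (le_antisymm (hyx z).2 (hxy z).2)
  · exact hz (le_antisymm (hxy z).1 (hyx z).1)

section ReverseTriangle

variable (hnn : ∀ x y : X, 0 ≤ d x y)
  (hrt : ∀ x y z : X, 0 < d x y → 0 < d y z → d x y + d y z ≤ d x z)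
include hnn hrt

theorem of_pos (hxy : 0 < d x y) : Jrel d x y := by
  intro p
  constructor
  · rcases (hnn p x).eq_or_lt with hpx | hpx
    · exact hpx ▸ hnn p y
    · linarith [hrt p x y hpx hxy]
  · rcases (hnn y p).eq_or_lt with hyp | hyp
    · exact hyp ▸ hnn x p
    · linarith [hrt x y p hxy hyp]

theorem add_le (hxy : Jrel d x y) (hyz : Jrel d y z) : d x y + d y z ≤ d x z := by
  rcases (hnn x y).eq_or_lt with hxy0 | hxy0
  · simpa [← hxy0] using (hxy z).2
  rcases (hnn y z).eq_or_lt with hyz0 | hyz0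
  · simpa [← hyz0] using (hyz x).1
  exact hrt x y z hxy0 hyz0

end ReverseTriangle

theorem pos_of_pos_left (hxy : 0 < d x y) (hyz : Jrel d y z) : 0 < d x z :=
  hxy.trans_le (hyz x).1

theorem pos_of_pos_right (hxy : Jrel d x y) (hyz : 0 < d y z) : 0 < d x z :=
  hyz.trans_le (hxy z).2

end Jrel

theorem isClosed_setOf_jrel [TopologicalSpace X] {d : X → X → ℝ}
    (hd : Continuous fun p : X × X => d p.1 p.2) : IsClosed {p : X × X | Jrel d p.1 p.2} := by
  simp only [Jrel, ofPred_forall, ofPred_and]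
  exact isClosed_iInter fun q =>
    (isClosed_le (hd.comp (continuous_const.prodMk continuous_fst))
      (hd.comp (continuous_const.prodMk continuous_snd))).inter
    (isClosed_le (hd.comp (continuous_snd.prodMk continuous_const))
      (hd.comp (continuous_fst.prodMk continuous_const)))

theorem lms_causal_relation_properties_general
    (T : TopologicalSpace X) (d : X → X → ℝ)
    (h : IsLMS T d) :
    (letI := T; IsClosed {p : X × X | Jrel d p.1 p.2}) ∧
    (∀ x : X, Jrel d x x) ∧
    (∀ x y z : X, Jrel d x y → Jrel d y z → Jrel d x z) ∧
    (∀ x y : X, Jrel d x y → Jrel d y x → x = y) ∧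
    (∀ x y : X, 0 < d x y → Jrel d x y) ∧
    (∀ x y z : X, 0 < d x y → Jrel d y z → 0 < d x z) ∧
    (∀ x y z : X, Jrel d x y → 0 < d y z → 0 < d x z) ∧
    (∀ x y z : X, Jrel d x y → Jrel d y z → d x y + d y z ≤ d x z) := by
  obtain ⟨hnn, hrt, ⟨hcont, -⟩, hsep⟩ := h
  exact ⟨@isClosed_setOf_jrel _ T d hcont, Jrel.refl, fun _ _ _ => Jrel.trans,
    fun _ _ => Jrel.antisymm hsep, fun _ _ => Jrel.of_pos hnn hrt,
    fun _ _ _ => Jrel.pos_of_pos_left, fun _ _ _ => Jrel.pos_of_pos_right,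
    fun _ _ _ => Jrel.add_le hnn hrt⟩

/-- Properties of the causal relation `J` of a Lorentzian metric space without
chronological boundary: `J` is closed, reflexive, transitive, antisymmetric,
contains `I`, satisfies push-up, and the reverse triangle inequality holds on `J`. -/
theorem lms_causal_relation_properties
    (T : TopologicalSpace X) (d : X → X → ℝ)
    (h : IsLMS T d) (hnb : NoBoundary d) :
    (letI := T; IsClosed {p : X × X | Jrel d p.1 p.2}) ∧
    (∀ x : X, Jrel d x x) ∧
    (∀ x y z : X, Jrel d x y → Jrel d y z → Jrel d x z) ∧
    (∀ x y : X, Jrel d x y → Jrel d y x → x = y) ∧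
    (∀ x y : X, 0 < d x y → Jrel d x y) ∧
    (∀ x y z : X, 0 < d x y → Jrel d y z → 0 < d x z) ∧
    (∀ x y z : X, Jrel d x y → 0 < d y z → 0 < d x z) ∧
    (∀ x y z : X, Jrel d x y → Jrel d y z → d x y + d y z ≤ d x z) :=
  lms_causal_relation_properties_general T d h
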